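/- Let Q = {0,…,q−1} and f : Q^n → Q. For a function s : Q^n → ℤ and for w = (w_0,…,w_{n−1}) ∈ Q^n and 0 ≤ i ≤ n−1, define p(w,i) = max(0, min(s(w) + f(w), ∑_{j=0}^{i} w_j) − max(s(w), ∑_{j=0}^{i−1} w_j)). Then f is non-increasing (f ∈ CA^-(q,n)) if and only if there exists s : Q^n → ℤ satisfying: (1) 0 ≤ s(w) and s(w) + f(w) ≤ ∑_{i=0}^{n−1} w_i for all w ∈ Q^n; (2) s(w) = 0 whenever f(w) = 0; and (3) for all (w_0,…,w_{2n−2}) ∈ Q^{2n−1}: ∑_{i=0}^{n−1} p((w_{n−1−i},…,w_{2n−2−i}), i) ≤ w_{n−1}. -/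

import Mathlib

/-- A local rule `f ∈ CA(q,n)` is conservative (`f ∈ CA^0(q,n)`) if for every period
`p ≥ 1` and every `p`-periodic (circular) word `w`, the sum of the images over one period
equals the sum of the states over one period. -/
def Conserves (q n : ℕ) (f : (Fin n → Fin q) → Fin q) : Prop :=
  ∀ p : ℕ, 1 ≤ p → ∀ w : ℤ → Fin q, (∀ i : ℤ, w (i + (p : ℤ)) = w i) →
    ∑ k ∈ Finset.range p, ((f (fun t => w ((k : ℤ) + ((t : ℕ) : ℤ)))) : ℤ) =
    ∑ k ∈ Finset.range p, ((w (k : ℤ)) : ℤ)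

/-- A local rule `f ∈ CA(q,n)` is non-increasing (`f ∈ CA^-(q,n)`) if for every period
`p ≥ 1` and every `p`-periodic (circular) word `w`, the sum of the images over one period
is at most the sum of the states over one period. -/
def NonIncreasing (q n : ℕ) (f : (Fin n → Fin q) → Fin q) : Prop :=
  ∀ p : ℕ, 1 ≤ p → ∀ w : ℤ → Fin q, (∀ i : ℤ, w (i + (p : ℤ)) = w i) →
    ∑ k ∈ Finset.range p, ((f (fun t => w ((k : ℤ) + ((t : ℕ) : ℤ)))) : ℤ) ≤
    ∑ k ∈ Finset.range p, ((w (k : ℤ)) : ℤ)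

open Finset Function

/-!
Read a state `a` as `a` particles and number the particles of a configuration from left to right,
so that cell `m` holds the particles `[c m, c (m + 1))`, `c` being the prefix sums. Then
`particleCount f s v i` is the number of particles that the image of the window `v` takes from its
cell `i` when it takes the particles `[s v, s v + f v)` of `v`.

If `0 ≤ s v` and `s v + f v ≤ ∑ v`, these counts add up to `f v`. Summing over a period and
regrouping by the cell the particles come from, condition (3) says that each cell gives away at most
its own particles, hence the rule is non-increasing.

Conversely, for a non-increasing rule let `s v` be the least value, over all configurations `z`
starting with `v` and all `k`, of the number of particles in `z₀ … z_{k+n-1}` minus the images of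
the first `k + 1` windows (`minExcess`); it is non-negative because such a finite piece can be
closed up into a periodic word. Prepending a cell shows that the intervals of particles taken by
consecutive windows are disjoint and in order, and such intervals meet each cell in at most its own
number of particles.
-/

section IntervalOverlap

variable {α : Type*} [AddCommGroup α] [LinearOrder α] [IsOrderedAddMonoid α]

theorem max_zero_min_sub_max_eq_sub {L R l r : α} (h : l ≤ r) :
    max 0 (min R r - max L l) = max L (min R r) - max L (min R l) := by
  grind

theorem max_zero_min_add_add_sub_max_add_add (L R l r x : α) :
    max 0 (min (x + R) (x + r) - max (x + L) (x + l)) = max 0 (min R r - max L l) := by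
  rw [min_add_add_left, max_add_add_left, add_sub_add_left_eq_sub]

theorem max_zero_min_self_sub_max_self (L l r : α) : max 0 (min L r - max L l) = 0 :=
  max_eq_left (sub_nonpos.2 ((min_le_left L r).trans (le_max_left L l)))

theorem sum_range_max_zero_min_sub_max_eq {B : ℕ → α} {L R : α} {N : ℕ} (hLR : L ≤ R)
    (hB : ∀ i, B i ≤ B (i + 1)) (h0 : B 0 ≤ L) (hN : R ≤ B N) :
    ∑ i ∈ range N, max 0 (min R (B (i + 1)) - max L (B i)) = R - L := by
  rw [sum_congr rfl fun i _ => max_zero_min_sub_max_eq_sub (hB i),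
    sum_range_sub fun i => max L (min R (B i)), min_eq_left hN, max_eq_right hLR,
    min_eq_right (h0.trans hLR), max_eq_left h0]

theorem sum_range_max_zero_min_sub_max_le {L R : ℕ → α} {l r : α} (hlr : l ≤ r)
    (hLR : ∀ a, L a ≤ R a) (hchain : ∀ a, R a ≤ L (a + 1)) (N : ℕ) :
    ∑ a ∈ range N, max 0 (min (R a) r - max (L a) l) ≤ r - l := by
  set κ : α → α := fun x => max l (min r x)
  have hκ : Monotone κ := fun x y hxy => max_le_max le_rfl (min_le_min le_rfl hxy)
  have hterm : ∀ a, max 0 (min (R a) r - max (L a) l) =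
      (κ (R a) - κ (L (a + 1))) + (κ (L (a + 1)) - κ (L a)) := by
    intro a
    rw [min_comm (R a), max_comm (L a), max_zero_min_sub_max_eq_sub (hLR a)]
    abel
  calc ∑ a ∈ range N, max 0 (min (R a) r - max (L a) l)
      = ∑ a ∈ range N, (κ (R a) - κ (L (a + 1))) + (κ (L N) - κ (L 0)) := by
        rw [← sum_range_sub fun a => κ (L a), ← sum_add_distrib]
        exact sum_congr rfl fun a _ => hterm a
    _ ≤ 0 + (r - l) := by
        gcongr
        · exact sum_nonpos fun a _ => sub_nonpos.2 (hκ (hchain a))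
        · exact max_le hlr (min_le_left _ _)
        · exact le_max_left _ _
    _ = r - l := zero_add _

end IntervalOverlap

theorem Function.Periodic.sum_range_comp_sub {M : Type*} [AddCommMonoid M] {g : ℤ → M} {p : ℕ}
    (hg : Periodic g p) (i : ℕ) : ∑ k ∈ range p, g (k - i) = ∑ k ∈ range p, g k := by
  induction i with
  | zero => simp
  | succ i ih =>
    rw [← ih]
    rcases p with _ | m
    · simp
    have hwrap : g ((0 : ℕ) - (i + 1 : ℕ)) = g (m - i) := by
      rw [← hg]; push_cast; ring_nf
    rw [sum_range_succ', sum_range_succ, hwrap]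
    congr 1
    refine sum_congr rfl fun k _ => congrArg g ?_
    push_cast
    ring

theorem Fin.sum_ite_lt_eq_sum_range {M : Type*} [AddCommMonoid M] {n i : ℕ} {v : Fin n → M}
    {g : ℕ → M} (hvg : ∀ j : Fin n, v j = g j) (hi : i ≤ n) :
    ∑ j : Fin n, (if (j : ℕ) < i then v j else 0) = ∑ m ∈ range i, g m := by
  simp only [hvg]
  rw [Fin.sum_univ_eq_sum_range (fun j => if j < i then g j else 0), sum_ite,
    sum_const_zero, add_zero]
  congr 1
  ext m
  simp only [mem_filter, mem_range]
  omega

variable {q n : ℕ}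

def window (z : ℕ → Fin q) (j : ℕ) : Fin n → Fin q := fun t => z (j + t)

variable (f : (Fin n → Fin q) → Fin q)

def particleCount (s : (Fin n → Fin q) → ℤ) (v : Fin n → Fin q) (i : ℕ) : ℤ :=
  max 0
    (min (s v + ((f v : ℤ))) (∑ j : Fin n, if (j : ℕ) ≤ i then ((v j : ℤ)) else 0) -
     max (s v) (∑ j : Fin n, if (j : ℕ) < i then ((v j : ℤ)) else 0))

theorem particleCount_eq_of_sum_range {s : (Fin n → Fin q) → ℤ} {v : Fin n → Fin q}
    {g : ℕ → ℤ} (hvg : ∀ j : Fin n, (v j : ℤ) = g j) {i : ℕ} (hi : i < n) :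
    particleCount f s v i =
      max 0 (min (s v + f v) (∑ m ∈ range (i + 1), g m) - max (s v) (∑ m ∈ range i, g m)) := by
  simp only [particleCount, ← Nat.lt_add_one_iff, Fin.sum_ite_lt_eq_sum_range hvg hi,
    Fin.sum_ite_lt_eq_sum_range hvg hi.le]

theorem particleCount_of_eq_zero (s : (Fin n → Fin q) → ℤ) {v : Fin n → Fin q}
    (hv : (f v : ℤ) = 0) (i : ℕ) : particleCount f s v i = 0 := by
  rw [particleCount, hv, add_zero, max_zero_min_self_sub_max_self]

theorem sum_particleCount_eq {s : (Fin n → Fin q) → ℤ} {v : Fin n → Fin q} (hs : 0 ≤ s v)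
    (hsf : s v + f v ≤ ∑ t, (v t : ℤ)) : ∑ i ∈ range n, particleCount f s v i = f v := by
  set g : ℕ → ℤ := fun m => if h : m < n then v ⟨m, h⟩ else 0
  have hvg : ∀ j : Fin n, (v j : ℤ) = g j := fun j => by simp [g, j.2]
  have hg : ∀ m, 0 ≤ g m := fun m => by
    simp only [g]
    split_ifs <;> positivity
  have hsum : ∑ t, (v t : ℤ) = ∑ m ∈ range n, g m := by
    simp only [hvg, Fin.sum_univ_eq_sum_range g]
  rw [sum_congr rfl fun i hi => particleCount_eq_of_sum_range f hvg (mem_range.1 hi),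
    sum_range_max_zero_min_sub_max_eq (B := fun i => ∑ m ∈ range i, g m)
      (le_add_of_nonneg_right (by positivity))
      (fun i => by rw [sum_range_succ]; exact le_add_of_nonneg_right (hg i))
      (by simpa using hs) (hsum ▸ hsf), add_sub_cancel_left]

theorem particleCount_window (s : (Fin n → Fin q) → ℤ) (u : ℕ → Fin q) {a i : ℕ}
    (h : a + i < n) :
    particleCount f s (window u a) i =
      max 0 (min (∑ m ∈ range a, (u m : ℤ) + s (window u a) + f (window u a))
          (∑ m ∈ range (a + i + 1), (u m : ℤ)) -
        max (∑ m ∈ range a, (u m : ℤ) + s (window u a)) (∑ m ∈ range (a + i), (u m : ℤ))) := by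
  rw [particleCount_eq_of_sum_range f (v := window u a) (g := fun m => u (a + m)) (fun _ => rfl)
      (by omega),
    Nat.add_assoc, sum_range_add (fun m => (u m : ℤ)) a (i + 1),
    sum_range_add (fun m => (u m : ℤ)) a i, add_assoc, max_zero_min_add_add_sub_max_add_add]

theorem nonIncreasing_of_sum_particleCount_le (s : (Fin n → Fin q) → ℤ)
    (hs : ∀ v, 0 ≤ s v ∧ s v + f v ≤ ∑ t, (v t : ℤ))
    (hcover : ∀ u : ℕ → Fin q,
      ∑ i ∈ range n, particleCount f s (window u (n - 1 - i)) i ≤ u (n - 1)) :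
    NonIncreasing q n f := by
  intro p _ w hw
  set win : ℤ → Fin n → Fin q := fun k t => w (k + (t : ℕ))
  have hwin : Periodic win p := fun k => funext fun t => by
    simp only [win, add_right_comm k (p : ℤ)]
    exact hw _
  have hcover_at : ∀ m : ℤ, ∑ i ∈ range n, particleCount f s (win (m - i)) i ≤ w m := by
    intro m
    have h := hcover fun t => w (m - (n - 1 : ℕ) + t)
    simp only [sub_add_cancel] at h
    refine le_of_eq_of_le (sum_congr rfl fun i hi => ?_) h
    have hi := mem_range.1 hi
    congr 1
    funext t
    simp only [win, window]
    congr 1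
    omega
  calc ∑ k ∈ range p, (f (win k) : ℤ)
      = ∑ k ∈ range p, ∑ i ∈ range n, particleCount f s (win k) i :=
        sum_congr rfl fun k _ => (sum_particleCount_eq f (hs _).1 (hs _).2).symm
    _ = ∑ i ∈ range n, ∑ m ∈ range p, particleCount f s (win (m - i)) i := by
        rw [sum_comm]
        exact sum_congr rfl fun i _ =>
          ((hwin.comp fun v => particleCount f s v i).sum_range_comp_sub i).symm
    _ ≤ ∑ m ∈ range p, (w m : ℤ) := by
        rw [sum_comm]
        exact sum_le_sum fun m _ => hcover_at m

def prependSeq {α : Type*} (a : α) (z : ℕ → α) : ℕ → α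
  | 0 => a
  | j + 1 => z j

theorem window_prependSeq_succ (a : Fin q) (z : ℕ → Fin q) (j : ℕ) :
    window (n := n) (prependSeq a z) (j + 1) = window z j := by
  funext t
  simp only [window, Nat.add_right_comm j 1]
  rfl

def excess (z : ℕ → Fin q) (k : ℕ) : ℤ :=
  ∑ j ∈ range (k + n), (z j : ℤ) - ∑ j ∈ range (k + 1), (f (window z j) : ℤ)

theorem excess_zero (z : ℕ → Fin q) :
    excess f z 0 = ∑ t : Fin n, (window z 0 t : ℤ) - f (window z 0) := by
  simp [excess, window, Fin.sum_univ_eq_sum_range (fun j => (z j : ℤ))]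

theorem excess_prependSeq_succ (a : Fin q) (z : ℕ → Fin q) (k : ℕ) :
    excess f (prependSeq a z) (k + 1) = a + excess f z k - f (window (prependSeq a z) 0) := by
  simp only [excess, Nat.add_right_comm k 1 n, sum_range_succ' _ (k + n),
    sum_range_succ' _ (k + 1), window_prependSeq_succ]
  simp only [prependSeq]
  ring

def excessSet (v : Fin n → Fin q) : Set ℤ :=
  {d | ∃ z k, window z 0 = v ∧ excess f z k = d}

noncomputable def minExcess (v : Fin n → Fin q) : ℤ := sInf (excessSet f v)

theorem exists_window_zero_eq (hn : 1 ≤ n) (v : Fin n → Fin q) :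
    ∃ z : ℕ → Fin q, window z 0 = v :=
  ⟨fun j => v ⟨j % n, Nat.mod_lt j hn⟩, funext fun t => by simp [window, Nat.mod_eq_of_lt t.2]⟩

theorem excessSet_nonempty (hn : 1 ≤ n) (v : Fin n → Fin q) : (excessSet f v).Nonempty := by
  obtain ⟨z, hz⟩ := exists_window_zero_eq hn v
  exact ⟨excess f z 0, z, 0, hz, rfl⟩

noncomputable def particleOffset (v : Fin n → Fin q) : ℤ :=
  if (f v : ℤ) = 0 then 0 else minExcess f v

theorem particleCount_particleOffset (v : Fin n → Fin q) (i : ℕ) :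
    particleCount f (particleOffset f) v i = particleCount f (minExcess f) v i := by
  by_cases hv : (f v : ℤ) = 0
  · rw [particleCount_of_eq_zero f _ hv, particleCount_of_eq_zero f _ hv]
  · simp only [particleCount, particleOffset, if_neg hv]

namespace NonIncreasing

variable {f}

theorem excess_nonneg (hf : NonIncreasing q n f) (hn : 1 ≤ n) (z : ℕ → Fin q) (k : ℕ) :
    0 ≤ excess f z k := by
  set p := k + n
  set w : ℤ → Fin q := fun i => z (i % p).toNat
  have hw : Periodic w p := fun i => by simp only [w, Int.add_emod_right]
  have hwz : ∀ m < p, w m = z m := fun m hm => by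
    simp only [w]
    rw [Int.emod_eq_of_lt (by omega) (by omega), Int.toNat_natCast]
  have hwin : ∀ j ≤ k, (fun t : Fin n => w ((j : ℤ) + ((t : ℕ) : ℤ))) = window z j := fun j hj =>
    funext fun t => by rw [← Nat.cast_add, hwz _ (by omega)]; rfl
  rw [excess, sub_nonneg]
  calc ∑ j ∈ range (k + 1), (f (window z j) : ℤ)
      = ∑ j ∈ range (k + 1), (f (fun t : Fin n => w ((j : ℤ) + ((t : ℕ) : ℤ))) : ℤ) :=
        sum_congr rfl fun j hj => by rw [hwin j (by simpa [Nat.lt_succ_iff] using hj)]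
    _ ≤ ∑ j ∈ range p, (f (fun t : Fin n => w ((j : ℤ) + ((t : ℕ) : ℤ))) : ℤ) :=
        sum_le_sum_of_subset_of_nonneg (range_subset_range.2 (by omega)) fun _ _ _ => by positivity
    _ ≤ ∑ m ∈ range p, (w m : ℤ) := hf p (by omega) w hw
    _ = ∑ m ∈ range p, (z m : ℤ) := sum_congr rfl fun m hm => by rw [hwz m (mem_range.1 hm)]

theorem bddBelow_excessSet (hf : NonIncreasing q n f) (hn : 1 ≤ n) (v : Fin n → Fin q) :
    BddBelow (excessSet f v) :=
  ⟨0, by rintro _ ⟨z, k, -, rfl⟩; exact hf.excess_nonneg hn z k⟩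

theorem minExcess_le (hf : NonIncreasing q n f) (hn : 1 ≤ n) {z : ℕ → Fin q} {v : Fin n → Fin q}
    (hz : window z 0 = v) (k : ℕ) : minExcess f v ≤ excess f z k :=
  csInf_le (hf.bddBelow_excessSet hn v) ⟨z, k, hz, rfl⟩

theorem minExcess_nonneg (hf : NonIncreasing q n f) (hn : 1 ≤ n) (v : Fin n → Fin q) :
    0 ≤ minExcess f v :=
  le_csInf (excessSet_nonempty f hn v) fun _ ⟨z, k, _, hk⟩ => hk ▸ hf.excess_nonneg hn z k

theorem exists_excess_eq_minExcess (hf : NonIncreasing q n f) (hn : 1 ≤ n) (v : Fin n → Fin q) :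
    ∃ z k, window z 0 = v ∧ excess f z k = minExcess f v :=
  Int.csInf_mem (excessSet_nonempty f hn v) (hf.bddBelow_excessSet hn v)

theorem minExcess_add_le_sum (hf : NonIncreasing q n f) (hn : 1 ≤ n) (v : Fin n → Fin q) :
    minExcess f v + f v ≤ ∑ t, (v t : ℤ) := by
  obtain ⟨z, hz⟩ := exists_window_zero_eq hn v
  have h := hf.minExcess_le hn hz 0
  rw [excess_zero, hz] at h
  linarith

theorem minExcess_window_add_le (hf : NonIncreasing q n f) (hn : 1 ≤ n) (z : ℕ → Fin q) (j : ℕ) :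
    minExcess f (window z j) + f (window z j) ≤ z j + minExcess f (window z (j + 1)) := by
  obtain ⟨z', k, hz', hk⟩ := hf.exists_excess_eq_minExcess hn (window z (j + 1))
  have hwin : window (n := n) (prependSeq (z j) z') 0 = window z j := by
    funext ⟨t, ht⟩
    cases t with
    | zero => rfl
    | succ t =>
      have h := congrFun hz' ⟨t, by omega⟩
      simp only [window, zero_add] at h ⊢
      rw [show j + (t + 1) = j + 1 + t by omega, ← h]
      rfl
  have h := hf.minExcess_le hn hwin (k + 1)
  rw [excess_prependSeq_succ, hwin, hk] at h
  linarith

theorem particleOffset_nonneg (hf : NonIncreasing q n f) (hn : 1 ≤ n) (v : Fin n → Fin q) :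
    0 ≤ particleOffset f v := by
  unfold particleOffset
  split_ifs
  exacts [le_rfl, hf.minExcess_nonneg hn v]

theorem particleOffset_add_le_sum (hf : NonIncreasing q n f) (hn : 1 ≤ n) (v : Fin n → Fin q) :
    particleOffset f v + f v ≤ ∑ t, (v t : ℤ) := by
  unfold particleOffset
  split_ifs with hv
  · rw [hv, add_zero]
    positivity
  · exact hf.minExcess_add_le_sum hn v

theorem sum_particleCount_minExcess_le (hf : NonIncreasing q n f) (hn : 1 ≤ n)
    (u : ℕ → Fin q) :
    ∑ i ∈ range n, particleCount f (minExcess f) (window u (n - 1 - i)) i ≤ u (n - 1) := by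
  set c : ℕ → ℤ := fun m => ∑ j ∈ range m, (u j : ℤ)
  set L : ℕ → ℤ := fun a => c a + minExcess f (window u a)
  have hterm : ∀ a ∈ range n,
      particleCount f (minExcess f) (window u (n - 1 - (n - 1 - a))) (n - 1 - a) =
        max 0 (min (L a + f (window u a)) (c n) - max (L a) (c (n - 1))) := by
    intro a ha
    have ha := mem_range.1 ha
    rw [Nat.sub_sub_self (by omega), particleCount_window f _ u (by omega),
      show a + (n - 1 - a) = n - 1 by omega, Nat.sub_add_cancel hn]
  have hchain : ∀ a, L a + f (window u a) ≤ L (a + 1) := fun a => by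
    have := hf.minExcess_window_add_le hn u a
    simp only [L, c, sum_range_succ]
    linarith
  have hcell : c n - c (n - 1) = u (n - 1) := by
    conv_lhs => rw [← Nat.sub_add_cancel hn]
    simp [c, sum_range_succ]
  have hlr : c (n - 1) ≤ c n := by
    rw [← sub_nonneg, hcell]
    positivity
  rw [← sum_range_reflect, sum_congr rfl hterm, ← hcell]
  exact sum_range_max_zero_min_sub_max_le hlr (fun a => le_add_of_nonneg_right (by positivity))
    hchain n

end NonIncreasing

/-- Words of length `2n-1` in condition (3) are encoded as functions `ℕ → Fin q` (only
coordinates `0,…,2n-2` are read). -/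
theorem nonincreasing_iff_exists_s_general
    (q n : ℕ) (hn : 1 ≤ n)
    (f : (Fin n → Fin q) → Fin q)
    (P : ((Fin n → Fin q) → ℤ) → (Fin n → Fin q) → ℕ → ℤ)
    (hP : ∀ (s : (Fin n → Fin q) → ℤ) (w : Fin n → Fin q) (i : ℕ),
      P s w i =
        max 0
          (min (s w + ((f w : ℤ))) (∑ j : Fin n, if (j : ℕ) ≤ i then ((w j : ℤ)) else 0) -
           max (s w) (∑ j : Fin n, if (j : ℕ) < i then ((w j : ℤ)) else 0))) :
    NonIncreasing q n f ↔
      ∃ s : (Fin n → Fin q) → ℤ,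
        (∀ w : Fin n → Fin q, 0 ≤ s w ∧ s w + ((f w : ℤ)) ≤ ∑ i : Fin n, ((w i : ℤ))) ∧
        (∀ w : Fin n → Fin q, ((f w : ℤ)) = 0 → s w = 0) ∧
        (∀ w : ℕ → Fin q,
          ∑ i ∈ Finset.range n, P s (fun t => w (n - 1 - i + (t : ℕ))) i ≤ ((w (n - 1) : ℤ))) := by
  obtain rfl : P = particleCount f := funext fun s => funext fun w => funext fun i => hP s w i
  refine ⟨fun hf => ⟨particleOffset f, fun v => ⟨?_, ?_⟩, fun v hv => if_pos hv, fun u => ?_⟩,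
    fun ⟨s, hs, _, hcover⟩ => nonIncreasing_of_sum_particleCount_le f s hs hcover⟩
  · exact hf.particleOffset_nonneg hn v
  · exact hf.particleOffset_add_le_sum hn v
  · exact (sum_congr rfl fun i _ => particleCount_particleOffset f _ i).trans_le
      (hf.sum_particleCount_minExcess_le hn u)

/-- characterization of non-increasing rules via the particle-assignment
function `s`.  `P s w i = max(0, min(s(w)+f(w), ∑_{j≤i} w_j) − max(s(w), ∑_{j<i} w_j))`
is the number of particles contributed by cell `i` of the window `w` to the image cell.
Words of length `2n-1` in condition (3) are encoded as functions `ℕ → Fin q` (only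
coordinates `0,…,2n-2` are read). -/
theorem nonincreasing_iff_exists_s
    (q n : ℕ) [NeZero q] (hn : 1 ≤ n)
    (f : (Fin n → Fin q) → Fin q)
    (P : ((Fin n → Fin q) → ℤ) → (Fin n → Fin q) → ℕ → ℤ)
    (hP : ∀ (s : (Fin n → Fin q) → ℤ) (w : Fin n → Fin q) (i : ℕ),
      P s w i =
        max 0
          (min (s w + ((f w : ℤ))) (∑ j : Fin n, if (j : ℕ) ≤ i then ((w j : ℤ)) else 0) -
           max (s w) (∑ j : Fin n, if (j : ℕ) < i then ((w j : ℤ)) else 0))) :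
    NonIncreasing q n f ↔
      ∃ s : (Fin n → Fin q) → ℤ,
        (∀ w : Fin n → Fin q, 0 ≤ s w ∧ s w + ((f w : ℤ)) ≤ ∑ i : Fin n, ((w i : ℤ))) ∧
        (∀ w : Fin n → Fin q, ((f w : ℤ)) = 0 → s w = 0) ∧
        (∀ w : ℕ → Fin q,
          ∑ i ∈ Finset.range n, P s (fun t => w (n - 1 - i + (t : ℕ))) i ≤ ((w (n - 1) : ℤ))) :=
  nonincreasing_iff_exists_s_general q n hn f P hP
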